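/- Fix integers m ≥ 2 and i, and let ω = e^{2πi/m}. With γ_{m,h} = (1/m) Σ_{ℓ=1}^{m−1} ω^{−hℓ} log(1/(1 − ω^ℓ)) (where the index h is taken modulo m), one has Σ_{j=1}^{m−1} (j/m) γ_{m,i+j} = −(1/m) Σ_{ℓ=1}^{m−1} ω^{−ℓ(i−1)} log(1 − ω^ℓ)/(1 − ω^ℓ). -/

import Mathlib

open Complex

lemma aux_sum_id_pow (x : ℂ) (n : ℕ) :
    (x - 1) * ∑ j ∈ Finset.range n, (j : ℂ) * x ^ j
      = ((n : ℂ) - 1) * x ^ n - (∑ j ∈ Finset.range n, x ^ j) + 1 := by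
  induction n with
  | zero => simp
  | succ n ih =>
    rw [Finset.sum_range_succ, Finset.sum_range_succ, mul_add, ih]
    push_cast
    ring

lemma aux_sum_id_root (x : ℂ) (m : ℕ) (hm : 2 ≤ m) (hxm : x ^ m = 1) (hx1 : x ≠ 1) :
    ∑ j ∈ Finset.Icc 1 (m - 1), (j : ℂ) * x ^ j = (m : ℂ) / (x - 1) := by
  have hx0 : x - 1 ≠ 0 := sub_ne_zero.mpr hx1
  have hgeom : ∑ j ∈ Finset.range m, x ^ j = 0 := by
    rw [geom_sum_eq hx1, hxm, sub_self, zero_div]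
  have hkey : (x - 1) * ∑ j ∈ Finset.range m, (j : ℂ) * x ^ j = (m : ℂ) := by
    rw [aux_sum_id_pow, hxm, hgeom]; ring
  have hIcc : Finset.Icc 1 (m - 1) = Finset.Ico 1 m := by
    rw [← Finset.Ico_add_one_right_eq_Icc]
    congr 1
    omega
  have hsplit : ∑ j ∈ Finset.range m, (j : ℂ) * x ^ j
      = ∑ j ∈ Finset.Ico 1 m, (j : ℂ) * x ^ j := by
    rw [Finset.range_eq_Ico, ← Finset.sum_Ico_consecutive _ (Nat.zero_le 1) (by omega)]
    simp
  rw [hIcc, ← hsplit, eq_div_iff hx0, mul_comm, hkey]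


lemma aux_re_lt (m : ℕ) (hm : 2 ≤ m) (ℓ : ℕ) (h1 : 1 ≤ ℓ) (h2 : ℓ < m) :
    ((Complex.exp (2 * Real.pi * Complex.I / m)) ^ (ℓ:ℕ)).re < 1 := by
  set z := (Complex.exp (2 * Real.pi * Complex.I / m)) ^ (ℓ:ℕ) with hz
  have hprim : IsPrimitiveRoot (Complex.exp (2 * Real.pi * Complex.I / m)) m :=
    Complex.isPrimitiveRoot_exp m (by omega)
  have hne : z ≠ 1 := hprim.pow_ne_one_of_pos_of_lt (by omega) h2
  have hzm : z ^ m = 1 := by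
    rw [hz, ← pow_mul, mul_comm ℓ m, pow_mul, hprim.pow_eq_one, one_pow]
  have habs : ‖z‖ = 1 := Complex.norm_eq_one_of_pow_eq_one hzm (by omega)
  have hle : z.re ≤ 1 := habs ▸ Complex.re_le_norm z
  rcases lt_or_eq_of_le hle with h | h
  · exact h
  · exfalso
    have hnsq : Complex.normSq z = 1 := by
      have := Complex.sq_norm z
      rw [habs] at this; linarith [this]
    have hsum : z.re ^ 2 + z.im ^ 2 = 1 := by
      rw [← hnsq]; simp [Complex.normSq_apply]; ring
    have him : z.im = 0 := by nlinarith
    exact hne (by apply Complex.ext <;> simp [← h, him])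

/-- `γ_{m,h} = (1/m) Σ_{ℓ=1}^{m−1} ω^{−hℓ} log(1/(1 − ω^ℓ))` with `ω = e^{2πi/m}`,
for an arbitrary integer index `h` (it depends only on `h` modulo `m`). -/
noncomputable def gammaModZ (m : ℕ) (h : ℤ) : ℂ :=
  (1 / (m : ℂ)) * ∑ ℓ ∈ Finset.Icc 1 (m - 1),
    (Complex.exp (2 * Real.pi * Complex.I / m)) ^ (-(h * ℓ)) *
      Complex.log (1 / (1 - (Complex.exp (2 * Real.pi * Complex.I / m)) ^ (ℓ : ℕ)))

theorem stmt_17 (m : ℕ) (i : ℤ) (hm : 2 ≤ m) :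
    ∑ j ∈ Finset.Icc 1 (m - 1), ((j : ℂ) / m) * gammaModZ m (i + j) =
      -(1 / (m : ℂ)) * ∑ ℓ ∈ Finset.Icc 1 (m - 1),
        (Complex.exp (2 * Real.pi * Complex.I / m)) ^ (-((ℓ : ℤ) * (i - 1))) *
          Complex.log (1 - (Complex.exp (2 * Real.pi * Complex.I / m)) ^ (ℓ : ℕ)) /
            (1 - (Complex.exp (2 * Real.pi * Complex.I / m)) ^ (ℓ : ℕ)) := by
  simp only [gammaModZ]
  set ω := Complex.exp (2 * Real.pi * Complex.I / m) with hωdef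
  have hm0 : (m : ℂ) ≠ 0 := Nat.cast_ne_zero.mpr (by omega)
  have hprim : IsPrimitiveRoot ω m := Complex.isPrimitiveRoot_exp m (by omega)
  have hω0 : ω ≠ 0 := Complex.exp_ne_zero _
  simp only [Finset.mul_sum]
  rw [Finset.sum_comm]
  apply Finset.sum_congr rfl
  intro ℓ hℓ
  rw [Finset.mem_Icc] at hℓ
  have hℓ1 : 1 ≤ ℓ := hℓ.1
  have hℓm : ℓ < m := by omega
  have hne1 : ω ^ (ℓ : ℕ) ≠ 1 := hprim.pow_ne_one_of_pos_of_lt (by omega) hℓm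
  have hz : (1 : ℂ) - ω ^ (ℓ : ℕ) ≠ 0 := sub_ne_zero.mpr (Ne.symm hne1)
  have hre : ((1:ℂ) - ω ^ (ℓ:ℕ)).re > 0 := by
    have := aux_re_lt m hm ℓ hℓ1 hℓm
    simp only [Complex.sub_re, Complex.one_re]
    rw [hωdef]; linarith
  have harg : ((1:ℂ) - ω ^ (ℓ:ℕ)).arg ≠ Real.pi := by
    intro h
    rw [Complex.arg_eq_pi_iff] at h
    linarith [h.1]
  have hlog : Complex.log (1 / (1 - ω ^ (ℓ:ℕ))) = - Complex.log (1 - ω ^ (ℓ:ℕ)) := by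
    rw [one_div, Complex.log_inv _ harg]
  -- x := ω^{-ℓ}
  set x : ℂ := ω ^ (-(ℓ : ℤ)) with hxdef
  have hx1 : x ≠ 1 := by
    intro h
    apply hne1
    have : ω ^ (ℓ : ℕ) * x = 1 := by
      rw [hxdef, ← zpow_natCast ω ℓ, ← zpow_add₀ hω0]
      simp
    rw [h, mul_one] at this; exact this
  have hxm : x ^ m = 1 := by
    rw [hxdef, ← zpow_natCast (ω ^ (-(ℓ:ℤ))) m, ← zpow_mul]
    have : (-(ℓ:ℤ)) * m = m * (-(ℓ:ℤ)) := by ring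
    rw [this, zpow_mul, zpow_natCast, hprim.pow_eq_one, one_zpow]
  have hsum := aux_sum_id_root x m hm hxm hx1
  have hx0 : x - 1 ≠ 0 := sub_ne_zero.mpr hx1
  -- pointwise rewrite of each j-term
  have hterm : ∀ j ∈ Finset.Icc 1 (m-1),
      (j : ℂ) / m * ((1 / (m:ℂ)) * (ω ^ (-((i + (j:ℤ)) * ℓ)) *
        Complex.log (1 / (1 - ω ^ (ℓ:ℕ)))))
      = (1 / (m:ℂ)) * (1 / (m:ℂ)) * ω ^ (-(i * (ℓ:ℤ))) *
          (- Complex.log (1 - ω ^ (ℓ:ℕ))) * ((j:ℂ) * x ^ (j:ℕ)) := by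
    intro j _
    have hpow : ω ^ (-((i + (j:ℤ)) * ℓ)) = ω ^ (-(i * (ℓ:ℤ))) * x ^ (j:ℕ) := by
      rw [hxdef, ← zpow_natCast (ω ^ (-(ℓ:ℤ))) j, ← zpow_mul, ← zpow_add₀ hω0]
      congr 1
      ring
    rw [hpow, hlog]
    ring
  rw [Finset.sum_congr rfl hterm, ← Finset.mul_sum, hsum]
  -- final algebra
  have hinv : x * ω ^ (ℓ:ℕ) = 1 := by
    rw [hxdef, ← zpow_natCast ω ℓ, ← zpow_add₀ hω0]; simp
  have hrel : (x - 1) * ω ^ (ℓ:ℕ) = 1 - ω ^ (ℓ:ℕ) := by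
    rw [sub_mul, hinv, one_mul]
  have hsplit : ω ^ (-((ℓ:ℤ) * (i - 1))) = ω ^ (-(i * (ℓ:ℤ))) * ω ^ (ℓ:ℕ) := by
    rw [← zpow_natCast ω ℓ, ← zpow_add₀ hω0]
    congr 1
    ring
  rw [hsplit]
  have hp0 : ω ^ (ℓ:ℕ) ≠ 0 := pow_ne_zero _ hω0
  have hz0 : ω ^ (i * (ℓ:ℤ)) ≠ 0 := zpow_ne_zero _ hω0
  field_simp
  linear_combination (Complex.log (1 - ω ^ (ℓ:ℕ))) * hrel
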